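/- arXiv:1907.01945 — 2 statements merged into one kernel-verified Lean document; each statement's English description precedes it below -/
import Mathlib

section
/- Let Y be an integer-valued random variable with CDF F_Y and probability mass function m_Y, let U be uniformly distributed on [0,1) and independent of Y, and set Z = Y + U. Then for every p ∈ (0,1), the quantile function of Z satisfies Q_Z(p) = Q_Y(p) + (p − F_Y(Q_Y(p) − 1)) / m_Y(Q_Y(p)), where Q denotes the quantile function Q(p) = inf{t : F(t) ≥ p}. -/
open MeasureTheory ProbabilityTheory

/-- Jittered quantile formula: if `Y` is integer-valued, `U` is uniform on `[0,1)`
and independent of `Y`, and `Z = Y + U`, then for every `p ∈ (0,1)`,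
`Q_Z(p) = Q_Y(p) + (p - F_Y(Q_Y(p) - 1)) / m_Y(Q_Y(p))`, where `Q` denotes the
quantile function `Q(p) = inf {t : F(t) ≥ p}`. -/
theorem jittered_quantile_formula
    {Ω : Type*} [MeasurableSpace Ω] (μ : Measure Ω) [IsProbabilityMeasure μ]
    (Y U : Ω → ℝ) (hY : Measurable Y) (hU : Measurable U)
    (hYint : ∀ ω, ∃ m : ℤ, Y ω = m)
    (hUdist : Measure.map U μ = volume.restrict (Set.Ico (0 : ℝ) 1))
    (hindep : IndepFun Y U μ)
    (FY FZ : ℝ → ℝ)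
    (hFY : ∀ t, FY t = (μ {ω | Y ω ≤ t}).toReal)
    (hFZ : ∀ t, FZ t = (μ {ω | Y ω + U ω ≤ t}).toReal)
    (mY : ℝ → ℝ) (hmY : ∀ t, mY t = (μ {ω | Y ω = t}).toReal)
    (QY QZ : ℝ → ℝ)
    (hQY : ∀ p, QY p = sInf {t : ℝ | p ≤ FY t})
    (hQZ : ∀ p, QZ p = sInf {t : ℝ | p ≤ FZ t}) :
    ∀ p ∈ Set.Ioo (0 : ℝ) 1,
      QZ p = QY p + (p - FY (QY p - 1)) / mY (QY p) := by
  intro p hp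
  obtain ⟨hp0, hp1⟩ := hp
  -- basic facts about FY
  have hFYmono : Monotone FY := by
    intro s t hst
    rw [hFY, hFY]
    exact ENNReal.toReal_mono (measure_ne_top μ _)
      (measure_mono fun ω hω => le_trans hω hst)
  -- FY is constant on integer steps
  have hstep : ∀ t : ℝ, FY t = FY ((⌊t⌋ : ℤ) : ℝ) := by
    intro t
    rw [hFY, hFY]
    have hsets : {ω | Y ω ≤ t} = {ω | Y ω ≤ ((⌊t⌋ : ℤ) : ℝ)} := by
      ext ω
      obtain ⟨m, hm⟩ := hYint ω
      simp only [Set.mem_setOf_eq, hm, Int.cast_le]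
      exact Int.le_floor.symm
    rw [hsets]
  -- there is an integer with p ≤ FY n
  have hexists_hi : ∃ n : ℤ, p ≤ FY ((n : ℤ) : ℝ) := by
    by_contra h
    push_neg at h
    have hmono : Monotone (fun n : ℕ => {ω | Y ω ≤ (n : ℝ)}) := by
      intro i j hij ω hω
      simp only [Set.mem_setOf_eq] at hω ⊢
      exact le_trans hω (by exact_mod_cast hij)
    have hUnion : (⋃ n : ℕ, {ω | Y ω ≤ (n : ℝ)}) = Set.univ := by
      ext ω
      simp only [Set.mem_iUnion, Set.mem_setOf_eq, Set.mem_univ, iff_true]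
      obtain ⟨n, hn⟩ := exists_nat_ge (Y ω)
      exact ⟨n, hn⟩
    have htend := tendsto_measure_iUnion_atTop (μ := μ) hmono
    rw [hUnion, measure_univ] at htend
    have hb : ∀ n : ℕ, (μ ∘ fun n : ℕ => {ω | Y ω ≤ (n : ℝ)}) n ≤ ENNReal.ofReal p := by
      intro n
      have h1 : FY ((n : ℤ) : ℝ) < p := h n
      rw [hFY] at h1
      simp only [Function.comp_apply]
      refine ENNReal.le_ofReal_iff_toReal_le (measure_ne_top μ _) hp0.le |>.mpr ?_
      push_cast at h1 ⊢
      exact h1.le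
    have hle := le_of_tendsto' htend hb
    have : ENNReal.ofReal p < 1 := ENNReal.ofReal_lt_one.mpr hp1
    exact absurd hle (not_le.mpr this)
  -- there is an integer with FY n < p
  have hexists_lo : ∃ n : ℤ, FY ((n : ℤ) : ℝ) < p := by
    by_contra h
    push_neg at h
    have hanti : Antitone (fun n : ℕ => {ω | Y ω ≤ -(n : ℝ)}) := by
      intro i j hij ω hω
      simp only [Set.mem_setOf_eq] at hω ⊢
      have : (i : ℝ) ≤ (j : ℝ) := by exact_mod_cast hij
      linarith
    have hInter : (⋂ n : ℕ, {ω | Y ω ≤ -(n : ℝ)}) = ∅ := by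
      ext ω
      simp only [Set.mem_iInter, Set.mem_setOf_eq, Set.mem_empty_iff_false, iff_false, not_forall,
        not_le]
      obtain ⟨n, hn⟩ := exists_nat_gt (-(Y ω))
      exact ⟨n, by linarith⟩
    have htend := tendsto_measure_iInter_atTop (μ := μ)
      (s := fun n : ℕ => {ω | Y ω ≤ -(n : ℝ)})
      (fun n => (hY measurableSet_Iic).nullMeasurableSet) hanti ⟨0, measure_ne_top μ _⟩
    rw [hInter, measure_empty] at htend
    have hb : ∀ n : ℕ, ENNReal.ofReal p ≤ (μ ∘ fun n : ℕ => {ω | Y ω ≤ -(n : ℝ)}) n := by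
      intro n
      have h1 : p ≤ FY ((-(n : ℤ) : ℤ) : ℝ) := h (-(n : ℤ))
      rw [hFY] at h1
      push_cast at h1
      exact ENNReal.ofReal_le_of_le_toReal h1
    have hge := ge_of_tendsto' htend hb
    have : (0 : ENNReal) < ENNReal.ofReal p := ENNReal.ofReal_pos.mpr hp0
    exact absurd hge (not_le.mpr this)
  -- least integer in the target set
  obtain ⟨nq, hnqS, hnqmin⟩ := Int.exists_least_of_bdd (P := fun n : ℤ => p ≤ FY ((n : ℤ) : ℝ))
    (by
      obtain ⟨n0, hn0⟩ := hexists_lo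
      refine ⟨n0, fun z hz => ?_⟩
      by_contra hzn
      push_neg at hzn
      have : (z : ℝ) ≤ (n0 : ℝ) := by exact_mod_cast hzn.le
      have := hFYmono this
      linarith) hexists_hi
  have hSleast : IsLeast {t : ℝ | p ≤ FY t} ((nq : ℤ) : ℝ) := by
    constructor
    · exact hnqS
    · intro t ht
      have h1 : p ≤ FY ((⌊t⌋ : ℤ) : ℝ) := (hstep t) ▸ ht
      have h2 := hnqmin ⌊t⌋ h1
      calc ((nq : ℤ) : ℝ) ≤ ((⌊t⌋ : ℤ) : ℝ) := by exact_mod_cast h2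
        _ ≤ t := Int.floor_le t
  have hq : QY p = ((nq : ℤ) : ℝ) := by rw [hQY]; exact hSleast.csInf_eq
  -- mass formula
  have hsplit : ∀ k : ℤ,
      μ {ω | Y ω ≤ (k : ℝ)} = μ {ω | Y ω ≤ (k : ℝ) - 1} + μ {ω | Y ω = (k : ℝ)} := by
    intro k
    have hdisj : Disjoint {ω | Y ω ≤ (k : ℝ) - 1} {ω | Y ω = (k : ℝ)} := by
      rw [Set.disjoint_left]
      rintro ω h1 h2
      simp only [Set.mem_setOf_eq] at h1 h2
      rw [h2] at h1
      linarith
    have hms : MeasurableSet {ω | Y ω = (k : ℝ)} := hY (measurableSet_singleton _)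
    have hseteq : {ω | Y ω ≤ (k : ℝ)} = {ω | Y ω ≤ (k : ℝ) - 1} ∪ {ω | Y ω = (k : ℝ)} := by
      ext ω
      obtain ⟨m, hm⟩ := hYint ω
      simp only [Set.mem_union, Set.mem_setOf_eq, hm]
      constructor
      · intro hle
        by_cases hmk : m = k
        · right; exact_mod_cast hmk
        · left
          have h1 : m ≤ k := by exact_mod_cast hle
          have h2 : m ≤ k - 1 := by omega
          have h3 : (m : ℝ) ≤ ((k - 1 : ℤ) : ℝ) := by exact_mod_cast h2
          push_cast at h3
          linarith
      · rintro (hle | heq)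
        · linarith
        · exact le_of_eq heq
    rw [hseteq, measure_union hdisj hms]
  have hmass : ∀ k : ℤ, mY ((k : ℤ) : ℝ) = FY ((k : ℤ) : ℝ) - FY (((k : ℤ) : ℝ) - 1) := by
    intro k
    rw [hmY, hFY, hFY, hsplit k,
      ENNReal.toReal_add (measure_ne_top μ _) (measure_ne_top μ _)]
    ring
  -- distribution of U
  have hUIco : μ (U ⁻¹' Set.Ico (0 : ℝ) 1) = 1 := by
    rw [← Measure.map_apply hU measurableSet_Ico, hUdist,
      Measure.restrict_apply measurableSet_Ico, Set.inter_self, Real.volume_Ico]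
    norm_num
  have hGc : μ {ω | U ω ∈ Set.Ico (0 : ℝ) 1}ᶜ = 0 := by
    have h1 : {ω | U ω ∈ Set.Ico (0 : ℝ) 1} = U ⁻¹' Set.Ico 0 1 := rfl
    rw [h1, measure_compl (hU measurableSet_Ico) (measure_ne_top μ _), measure_univ, hUIco,
      tsub_self]
  have hUle : ∀ u : ℝ, 0 ≤ u → u < 1 → μ {ω | U ω ≤ u} = ENNReal.ofReal u := by
    intro u h0 h1
    have he : {ω | U ω ≤ u} = U ⁻¹' (Set.Iic u) := rfl
    rw [he, ← Measure.map_apply hU measurableSet_Iic, hUdist,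
      Measure.restrict_apply measurableSet_Iic]
    have h2 : Set.Iic u ∩ Set.Ico (0 : ℝ) 1 = Set.Icc 0 u := by
      ext x
      simp only [Set.mem_inter_iff, Set.mem_Iic, Set.mem_Ico, Set.mem_Icc]
      constructor
      · rintro ⟨ha, hb, hc⟩; exact ⟨hb, ha⟩
      · rintro ⟨ha, hb⟩; exact ⟨hb, ha, lt_of_le_of_lt hb h1⟩
    rw [h2, Real.volume_Icc, sub_zero]
  -- CDF of Z on [k, k+1)
  have hFZform : ∀ (k : ℤ) (u : ℝ), 0 ≤ u → u < 1 →
      FZ ((k : ℝ) + u) = FY ((k : ℝ) - 1) + u * mY (k : ℝ) := by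
    intro k u h0 h1
    have key : {ω | Y ω + U ω ≤ (k : ℝ) + u} ∩ {ω | U ω ∈ Set.Ico (0 : ℝ) 1}
        = ({ω | Y ω ≤ (k : ℝ) - 1} ∪ ({ω | Y ω = (k : ℝ)} ∩ {ω | U ω ≤ u}))
          ∩ {ω | U ω ∈ Set.Ico (0 : ℝ) 1} := by
      ext ω
      obtain ⟨m, hm⟩ := hYint ω
      simp only [Set.mem_inter_iff, Set.mem_union, Set.mem_setOf_eq, Set.mem_Ico, hm]
      constructor
      · rintro ⟨hle, hG0, hG1⟩
        refine ⟨?_, hG0, hG1⟩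
        by_cases hmk : m ≤ k - 1
        · left
          have h3 : (m : ℝ) ≤ ((k - 1 : ℤ) : ℝ) := by exact_mod_cast hmk
          push_cast at h3
          linarith
        · right
          have hmk' : k ≤ m := by omega
          have h1' : (k : ℝ) ≤ (m : ℝ) := by exact_mod_cast hmk'
          have h4 : (m : ℝ) < (k : ℝ) + 1 := by linarith
          have h5 : m < k + 1 := by exact_mod_cast h4
          have h6 : m = k := by omega
          refine ⟨by exact_mod_cast h6, ?_⟩
          have h7 : (m : ℝ) = (k : ℝ) := by exact_mod_cast h6
          linarith
      · rintro ⟨hmem, hG0, hG1⟩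
        refine ⟨?_, hG0, hG1⟩
        rcases hmem with hle | ⟨heq, hule⟩
        · linarith
        · linarith
    have hμ1 : μ {ω | Y ω + U ω ≤ (k : ℝ) + u}
        = μ ({ω | Y ω ≤ (k : ℝ) - 1} ∪ ({ω | Y ω = (k : ℝ)} ∩ {ω | U ω ≤ u})) := by
      rw [← measure_inter_conull hGc, key, measure_inter_conull hGc]
    have hdisj : Disjoint {ω | Y ω ≤ (k : ℝ) - 1} ({ω | Y ω = (k : ℝ)} ∩ {ω | U ω ≤ u}) := by
      rw [Set.disjoint_left]
      rintro ω h1' ⟨h2', _⟩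
      simp only [Set.mem_setOf_eq] at h1' h2'
      rw [h2'] at h1'
      linarith
    have hmeas2 : MeasurableSet ({ω | Y ω = (k : ℝ)} ∩ {ω | U ω ≤ u}) :=
      (hY (measurableSet_singleton _)).inter (hU measurableSet_Iic)
    have hprod : μ ({ω | Y ω = (k : ℝ)} ∩ {ω | U ω ≤ u})
        = μ {ω | Y ω = (k : ℝ)} * ENNReal.ofReal u := by
      have h8 := hindep.measure_inter_preimage_eq_mul {(k : ℝ)} (Set.Iic u)
        (measurableSet_singleton _) measurableSet_Iic
      have hYpre : Y ⁻¹' {(k : ℝ)} = {ω | Y ω = (k : ℝ)} := rfl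
      have hUpre : U ⁻¹' (Set.Iic u) = {ω | U ω ≤ u} := rfl
      rw [hYpre, hUpre] at h8
      rw [h8, hUle u h0 h1]
    rw [hFZ, hμ1, measure_union hdisj hmeas2, hprod,
      ENNReal.toReal_add (measure_ne_top μ _)
        (ENNReal.mul_ne_top (measure_ne_top μ _) ENNReal.ofReal_ne_top),
      ENNReal.toReal_mul, ENNReal.toReal_ofReal h0, hFY, hmY]
    ring
  -- key quantities
  have hpb : p ≤ FY ((nq : ℤ) : ℝ) := hnqS
  have hqa : FY (((nq : ℤ) : ℝ) - 1) < p := by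
    by_contra hcon
    push_neg at hcon
    have h1 : p ≤ FY ((nq - 1 : ℤ) : ℝ) := by push_cast; exact hcon
    have := hnqmin (nq - 1) h1
    omega
  have hmnq : mY ((nq : ℤ) : ℝ) = FY ((nq : ℤ) : ℝ) - FY (((nq : ℤ) : ℝ) - 1) := hmass nq
  have hmpos : 0 < mY ((nq : ℤ) : ℝ) := by rw [hmnq]; linarith
  set r : ℝ := (p - FY (((nq : ℤ) : ℝ) - 1)) / mY ((nq : ℤ) : ℝ) with hr_def
  have hr0 : 0 < r := div_pos (by linarith) hmpos
  have hr1 : r ≤ 1 := by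
    rw [hr_def, div_le_one hmpos, hmnq]
    linarith
  have hrm : r * mY ((nq : ℤ) : ℝ) = p - FY (((nq : ℤ) : ℝ) - 1) :=
    div_mul_cancel₀ _ (ne_of_gt hmpos)
  -- least element of the Z-quantile set
  have hTleast : IsLeast {t : ℝ | p ≤ FZ t} (((nq : ℤ) : ℝ) + r) := by
    constructor
    · show p ≤ FZ (((nq : ℤ) : ℝ) + r)
      by_cases hrlt : r < 1
      · rw [hFZform nq r hr0.le hrlt]
        linarith [hrm]
      · have hr' : r = 1 := le_antisymm hr1 (not_lt.mp hrlt)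
        have heq : ((nq : ℤ) : ℝ) + r = ((nq + 1 : ℤ) : ℝ) + 0 := by push_cast; linarith
        rw [heq, hFZform (nq + 1) 0 le_rfl zero_lt_one]
        have heq2 : ((nq + 1 : ℤ) : ℝ) - 1 = ((nq : ℤ) : ℝ) := by push_cast; ring
        rw [heq2]
        linarith
    · intro t ht
      simp only [Set.mem_setOf_eq] at ht
      by_contra hlt
      push_neg at hlt
      set k : ℤ := ⌊t⌋ with hk_def
      have hu0 : 0 ≤ t - (k : ℝ) := sub_nonneg.mpr (Int.floor_le t)
      have hu1 : t - (k : ℝ) < 1 := by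
        have := Int.lt_floor_add_one t
        simp only [hk_def]
        linarith
      have hFZt : FZ t = FY ((k : ℝ) - 1) + (t - (k : ℝ)) * mY (k : ℝ) := by
        have h9 := hFZform k (t - (k : ℝ)) hu0 hu1
        rw [show (k : ℝ) + (t - (k : ℝ)) = t by ring] at h9
        exact h9
      rcases lt_trichotomy k nq with hkq | hkq | hkq
      · -- k ≤ nq - 1 : FZ t ≤ FY k ≤ FY (nq - 1) < p
        have hk1 : (k : ℝ) ≤ ((nq : ℤ) : ℝ) - 1 := by
          have : k ≤ nq - 1 := by omega
          have h10 : (k : ℝ) ≤ ((nq - 1 : ℤ) : ℝ) := by exact_mod_cast this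
          push_cast at h10
          linarith
        have hFYk : FY ((k : ℝ)) ≤ FY (((nq : ℤ) : ℝ) - 1) := hFYmono hk1
        have hmk := hmass k
        have hmono1 : FY ((k : ℝ) - 1) ≤ FY ((k : ℝ)) := hFYmono (by linarith)
        have hub : FZ t ≤ FY ((k : ℝ)) := by
          rw [hFZt, hmk]
          nlinarith
        linarith
      · -- k = nq
        subst hkq
        have hur : t - (k : ℝ) < r := by
          simp only [hk_def] at hlt ⊢
          linarith
        have hub : FZ t < p := by
          rw [hFZt]
          nlinarith [hrm]
        linarith
      · -- k ≥ nq + 1 : contradiction with t < nq + r ≤ nq + 1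
        have h11 : ((nq : ℤ) : ℝ) + 1 ≤ (k : ℝ) := by
          have : nq + 1 ≤ k := by omega
          exact_mod_cast this
        have h12 : (k : ℝ) ≤ t := Int.floor_le t
        linarith
  rw [hQZ p, hq, hTleast.csInf_eq]
end

section
/- Let Y be an integer-valued random variable, U uniformly distributed on [0,1) and independent of Y, and Z = Y + U. Then the jittered quantiles dominate the true quantiles: for every p ∈ (0,1), Q_Z(p) > Q_Y(p), where Q denotes the quantile function Q(p) = inf{t : F(t) ≥ p}. This follows since Q_Z(p) − Q_Y(p) = (p − F_Y(Q_Y(p) − 1)) / m_Y(Q_Y(p)) and F_Y(Q_Y(p) − 1) < p. -/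
/-! As `F_Y` is constant between consecutive integers, `k = Q_Y(p)` is an integer with
`F_Y(k - 1) < p`. Since `Y` is integer-valued, `Y + U ≤ k + δ` forces `Y ≤ k - 1` or `U ≤ δ`,
so `F_Z(k + δ) ≤ F_Y(k - 1) + δ < p` for small `δ > 0`, whence `Q_Z(p) ≥ k + δ`. -/

open MeasureTheory ProbabilityTheory Set Filter

lemma Int.cast_le_sub_one_or_le_of_add_le {m k : ℤ} {u s : ℝ} (h : m + u ≤ k + s) :
    (m : ℝ) ≤ k - 1 ∨ u ≤ s := by
  rcases le_or_gt m (k - 1) with hmk | hkm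
  · exact Or.inl (by exact_mod_cast hmk)
  · have : (k : ℝ) ≤ m := by exact_mod_cast Int.le_of_sub_one_lt hkm
    exact Or.inr (by linarith)

lemma le_csInf_setOf_le_of_lt {F : ℝ → ℝ} (hF : Monotone F) {p x : ℝ}
    (hne : ∃ t, p ≤ F t) (hx : F x < p) : x ≤ sInf {t | p ≤ F t} :=
  le_csInf hne fun _ ht => le_of_not_gt fun htx => (hx.trans_le' (hF htx.le)).not_ge ht

lemma exists_int_isLeast_setOf_le {F : ℝ → ℝ} (hfloor : ∀ t, F ⌊t⌋ = F t) {p : ℝ}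
    (hne : ∃ t, p ≤ F t) (hbdd : BddBelow {t | p ≤ F t}) :
    ∃ k : ℤ, IsLeast {t | p ≤ F t} k := by
  obtain ⟨b, hb⟩ := hbdd
  obtain ⟨t, ht⟩ := hne
  obtain ⟨k, hk, hleast⟩ := Int.exists_least_of_bdd (P := fun m : ℤ => p ≤ F m)
    ⟨⌊b⌋, fun m hm => Int.floor_le_iff.2 (by linarith [hb hm])⟩ ⟨⌊t⌋, (hfloor t).symm ▸ ht⟩
  refine ⟨k, hk, fun s hs => ?_⟩
  calc (k : ℝ) ≤ ⌊s⌋ := by exact_mod_cast hleast ⌊s⌋ ((hfloor s).symm ▸ hs)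
    _ ≤ s := Int.floor_le s

lemma setOf_le_floor_eq {Ω : Type*} {X : Ω → ℝ} (hXint : ∀ ω, ∃ m : ℤ, X ω = m) (t : ℝ) :
    {ω | X ω ≤ ⌊t⌋} = {ω | X ω ≤ t} := by
  ext ω
  obtain ⟨m, hm⟩ := hXint ω
  simp only [mem_ofPred_eq, hm, Int.cast_le, Int.le_floor]

namespace ProbabilityTheory

lemma exists_le_cdf (ν : Measure ℝ) {p : ℝ} (hp : p < 1) : ∃ t, p ≤ cdf ν t :=
  ((tendsto_cdf_atTop ν).eventually (eventually_ge_nhds hp)).exists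

lemma bddBelow_setOf_le_cdf (ν : Measure ℝ) {p : ℝ} (hp : 0 < p) :
    BddBelow {t | p ≤ cdf ν t} := by
  obtain ⟨b, hb⟩ :=
    eventually_atBot.1 ((tendsto_cdf_atBot ν).eventually (eventually_lt_nhds hp))
  exact ⟨b, fun t ht => le_of_not_gt fun htb => (hb t htb.le).not_ge ht⟩

variable {Ω : Type*} [MeasurableSpace Ω] {μ : Measure Ω}

lemma cdf_map {X : Ω → ℝ} [IsProbabilityMeasure μ] (hX : Measurable X) (t : ℝ) :
    cdf (μ.map X) t = μ.real {ω | X ω ≤ t} := by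
  have := Measure.isProbabilityMeasure_map (μ := μ) hX.aemeasurable
  rw [cdf_eq_real, map_measureReal_apply hX measurableSet_Iic]
  rfl

lemma measureReal_setOf_le_of_map_eq_uniform {U : Ω → ℝ} (hU : Measurable U)
    (hUdist : μ.map U = volume.restrict (Ico 0 1)) {s : ℝ} (hs : 0 ≤ s) :
    μ.real {ω | U ω ≤ s} ≤ s :=
  calc μ.real {ω | U ω ≤ s} = (μ.map U).real (Iic s) :=
        (map_measureReal_apply hU measurableSet_Iic).symm
    _ = volume.real (Iic s ∩ Ico 0 1) := by
        rw [hUdist, measureReal_restrict_apply measurableSet_Iic]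
    _ ≤ volume.real (Icc 0 s) :=
        measureReal_mono (fun x hx => ⟨hx.2.1, hx.1⟩) measure_Icc_lt_top.ne
    _ = s := by rw [Real.volume_real_Icc_of_le hs, sub_zero]

lemma measureReal_add_le_int_add_le [IsFiniteMeasure μ] {Y U : Ω → ℝ}
    (hYint : ∀ ω, ∃ m : ℤ, Y ω = m) (hU : Measurable U)
    (hUdist : μ.map U = volume.restrict (Ico 0 1)) (k : ℤ) {s : ℝ} (hs : 0 ≤ s) :
    μ.real {ω | Y ω + U ω ≤ k + s} ≤ μ.real {ω | Y ω ≤ k - 1} + s := by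
  have hsub : {ω | Y ω + U ω ≤ k + s} ⊆ {ω | Y ω ≤ k - 1} ∪ {ω | U ω ≤ s} := fun ω hω => by
    obtain ⟨m, hm⟩ := hYint ω
    simp only [mem_union, mem_ofPred_eq, hm] at hω ⊢
    exact Int.cast_le_sub_one_or_le_of_add_le hω
  calc μ.real {ω | Y ω + U ω ≤ k + s}
      ≤ μ.real {ω | Y ω ≤ k - 1} + μ.real {ω | U ω ≤ s} :=
        (measureReal_mono hsub).trans (measureReal_union_le _ _)
    _ ≤ μ.real {ω | Y ω ≤ k - 1} + s := by
        gcongr; exact measureReal_setOf_le_of_map_eq_uniform hU hUdist hs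

end ProbabilityTheory

theorem jittered_quantiles_dominate_general
    {Ω : Type*} [MeasurableSpace Ω] (μ : Measure Ω) [IsProbabilityMeasure μ]
    (Y U : Ω → ℝ) (hY : Measurable Y) (hU : Measurable U)
    (hYint : ∀ ω, ∃ m : ℤ, Y ω = m)
    (hUdist : Measure.map U μ = volume.restrict (Set.Ico (0 : ℝ) 1))
    (FY FZ : ℝ → ℝ)
    (hFY : ∀ t, FY t = (μ {ω | Y ω ≤ t}).toReal)
    (hFZ : ∀ t, FZ t = (μ {ω | Y ω + U ω ≤ t}).toReal)
    (QY QZ : ℝ → ℝ)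
    (hQY : ∀ p, QY p = sInf {t : ℝ | p ≤ FY t})
    (hQZ : ∀ p, QZ p = sInf {t : ℝ | p ≤ FZ t}) :
    ∀ p ∈ Set.Ioo (0 : ℝ) 1, QY p < QZ p := by
  rintro p ⟨hp0, hp1⟩
  have hFYcdf : FY = cdf (μ.map Y) := funext fun t => (hFY t).trans (cdf_map hY t).symm
  have hFZcdf : FZ = cdf (μ.map fun ω => Y ω + U ω) :=
    funext fun t => (hFZ t).trans (cdf_map (hY.add hU) t).symm
  have hfloor : ∀ t, FY ⌊t⌋ = FY t := fun t => by rw [hFY, hFY, setOf_le_floor_eq hYint]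
  obtain ⟨k, hk⟩ := exists_int_isLeast_setOf_le hfloor (hFYcdf ▸ exists_le_cdf _ hp1)
    (hFYcdf ▸ bddBelow_setOf_le_cdf _ hp0)
  have hgap : FY (k - 1) < p := lt_of_not_ge fun h => by linarith [hk.2 h]
  obtain ⟨δ, hδ0, hδp⟩ : ∃ δ > 0, FY (k - 1) + δ < p :=
    ⟨(p - FY (k - 1)) / 2, by linarith, by linarith⟩
  have hFZδ : FZ (k + δ) < p :=
    calc FZ (k + δ) = μ.real {ω | Y ω + U ω ≤ k + δ} := hFZ _
      _ ≤ μ.real {ω | Y ω ≤ k - 1} + δ :=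
          measureReal_add_le_int_add_le hYint hU hUdist k hδ0.le
      _ = FY (k - 1) + δ := by rw [hFY]; rfl
      _ < p := hδp
  have hQZδ : k + δ ≤ QZ p := hQZ p ▸ le_csInf_setOf_le_of_lt (hFZcdf ▸ monotone_cdf _)
    (hFZcdf ▸ exists_le_cdf _ hp1) hFZδ
  rw [hQY, hk.csInf_eq]
  linarith

/-- Jittered quantiles dominate the true quantiles: if `Y` is integer-valued, `U` is
uniform on `[0,1)` and independent of `Y`, and `Z = Y + U`, then for every
`p ∈ (0,1)`, `Q_Z(p) > Q_Y(p)`, where `Q` denotes the quantile function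
`Q(p) = inf {t : F(t) ≥ p}`. -/
theorem jittered_quantiles_dominate
    {Ω : Type*} [MeasurableSpace Ω] (μ : Measure Ω) [IsProbabilityMeasure μ]
    (Y U : Ω → ℝ) (hY : Measurable Y) (hU : Measurable U)
    (hYint : ∀ ω, ∃ m : ℤ, Y ω = m)
    (hUdist : Measure.map U μ = volume.restrict (Set.Ico (0 : ℝ) 1))
    (hindep : IndepFun Y U μ)
    (FY FZ : ℝ → ℝ)
    (hFY : ∀ t, FY t = (μ {ω | Y ω ≤ t}).toReal)
    (hFZ : ∀ t, FZ t = (μ {ω | Y ω + U ω ≤ t}).toReal)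
    (QY QZ : ℝ → ℝ)
    (hQY : ∀ p, QY p = sInf {t : ℝ | p ≤ FY t})
    (hQZ : ∀ p, QZ p = sInf {t : ℝ | p ≤ FZ t}) :
    ∀ p ∈ Set.Ioo (0 : ℝ) 1, QY p < QZ p :=
  jittered_quantiles_dominate_general μ Y U hY hU hYint hUdist FY FZ hFY hFZ QY QZ hQY hQZ
end
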